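/- arXiv:2409.07240 — 4 statements merged into one kernel-verified Lean document; each statement's English description precedes it below -/
import Mathlib

section
/- Let ρ be a primitive p-th root of unity in a field F (p prime, p invertible in F). If γ, δ are elements of an F-algebra with γδ = ρδγ and γ invertible, then for any polynomial f ∈ F[x], (f(γ)δ)^p = (∏_{i=0}^{p-1} f(ρ^i γ)) · δ^p, where each f(ρ^i γ) commutes with γ. -/
open Polynomial

theorem stmt1 (F : Type*) [Field F] (p : ℕ) (hp : p.Prime)
    (hchar : (p : F) ≠ 0) (ρ : F) (hρ : IsPrimitiveRoot ρ p)
    (A : Type*) [Ring A] [Algebra F A] (γ δ : A) (hγ : IsUnit γ)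
    (hcomm : γ * δ = ρ • (δ * γ))
    (f : Polynomial F) :
    (Polynomial.aeval γ f * δ) ^ p =
      ((List.range p).map fun i => Polynomial.aeval (ρ ^ i • γ) f).prod * δ ^ p ∧
    ∀ i : ℕ, Commute (Polynomial.aeval (ρ ^ i • γ) f) γ := by
  have hρp : ρ ^ p = 1 := hρ.pow_eq_one
  have haev : ∀ (c : F) (g : F[X]), aeval (c • γ) g = aeval γ (g.comp (C c * X)) := by
    intro c g
    rw [aeval_comp]
    simp [Algebra.smul_def]
  have hc2 : ∀ (g h : F[X]), Commute (aeval γ g) (aeval γ h) := by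
    intro g h
    unfold Commute SemiconjBy
    rw [← map_mul, ← map_mul, mul_comm]
  set g : ℕ → A := fun i => aeval (ρ ^ i • γ) f with hg
  have hgcomm : ∀ i j, Commute (g i) (g j) := by
    intro i j
    simp only [hg, haev]
    exact hc2 _ _
  have hcommγ : ∀ i : ℕ, Commute (g i) γ := by
    intro i
    simp only [hg, haev]
    have := hc2 (f.comp (C (ρ ^ i) * X)) X
    simpa using this
  have hswap : ∀ c : F, (c • γ) * δ = ρ • (δ * (c • γ)) := by
    intro c
    rw [smul_mul_assoc, hcomm, mul_smul_comm, smul_comm]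
  have hpow : ∀ (c : F) (n : ℕ), (c • γ) ^ n * δ = ρ ^ n • (δ * (c • γ) ^ n) := by
    intro c n
    induction n with
    | zero => simp
    | succ n ih =>
      rw [pow_succ, mul_assoc, hswap, mul_smul_comm, ← mul_assoc, ih,
        smul_mul_assoc, smul_smul, pow_succ, mul_assoc, mul_comm ρ (ρ ^ n)]
  have hmain : ∀ (c : F) (q : F[X]), aeval (c • γ) q * δ = δ * aeval ((ρ * c) • γ) q := by
    intro c q
    induction q using Polynomial.induction_on' with
    | add a b ha hb => rw [map_add, map_add, add_mul, mul_add, ha, hb]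
    | monomial n a =>
      rw [aeval_monomial, aeval_monomial]
      have h1 : ((ρ * c) • γ) ^ n = ρ ^ n • ((c • γ) ^ n) := by
        rw [mul_smul, _root_.smul_pow]
      rw [h1, mul_assoc, hpow, mul_smul_comm, mul_smul_comm, ← mul_assoc,
        mul_smul_comm, Algebra.commutes, mul_assoc]
  have hkey : ∀ i : ℕ, g i * δ = δ * g (i + 1) := by
    intro i
    have := hmain (ρ ^ i) f
    simpa [hg, pow_succ'] using this
  have hgd : ∀ (m k : ℕ), g k * δ ^ m = δ ^ m * g (k + m) := by
    intro m
    induction m with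
    | zero => simp
    | succ m ih =>
      intro k
      rw [pow_succ', ← mul_assoc, hkey, mul_assoc, ih (k + 1), ← mul_assoc]
      congr 2
      omega
  have hlist : ∀ n : ℕ,
      ((List.range n).map g).prod * δ = δ * ((List.range n).map fun i => g (i + 1)).prod := by
    intro n
    induction n with
    | zero => simp
    | succ n ih =>
      rw [List.range_succ, List.map_append, List.map_append, List.prod_append,
        List.prod_append, List.map_singleton, List.map_singleton,
        List.prod_singleton, List.prod_singleton, mul_assoc, hkey, ← mul_assoc, ih,
        mul_assoc]
  have hmainpow : ∀ n : ℕ,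
      (g 0 * δ) ^ n = δ ^ n * ((List.range n).map fun i => g (i + 1)).prod := by
    intro n
    induction n with
    | zero => simp
    | succ n ih =>
      have hcom : Commute (g (n + 1)) (((List.range n).map fun i => g (i + 1)).prod) := by
        apply Commute.list_prod_right
        intro x hx
        simp only [List.mem_map] at hx
        obtain ⟨i, _, rfl⟩ := hx
        exact hgcomm _ _
      calc (g 0 * δ) ^ (n + 1)
          = (g 0 * δ) * (δ ^ n * ((List.range n).map fun i => g (i + 1)).prod) := by
            rw [pow_succ', ih]
        _ = (g 0 * δ ^ (n + 1)) * ((List.range n).map fun i => g (i + 1)).prod := by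
            rw [← mul_assoc, mul_assoc (g 0), ← pow_succ']
        _ = δ ^ (n + 1) * (g (n + 1) * ((List.range n).map fun i => g (i + 1)).prod) := by
            rw [hgd (n + 1) 0, zero_add, mul_assoc]
        _ = δ ^ (n + 1) * (((List.range n).map fun i => g (i + 1)).prod * g (n + 1)) := by
            rw [hcom.eq]
        _ = δ ^ (n + 1) * ((List.range (n + 1)).map fun i => g (i + 1)).prod := by
            rw [List.range_succ, List.map_append, List.prod_append, List.map_singleton,
              List.prod_singleton]
  have hshift : ((List.range p).map fun i => g (i + 1)).prod = ((List.range p).map g).prod := by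
    obtain ⟨m, rfl⟩ : ∃ m, p = m + 1 := ⟨p - 1, (Nat.succ_pred_eq_of_pos hp.pos).symm⟩
    have hgp : g (m + 1) = g 0 := by
      simp [hg, hρp]
    have hcom : Commute (g 0) (((List.range m).map fun i => g (i + 1)).prod) := by
      apply Commute.list_prod_right
      intro x hx
      simp only [List.mem_map] at hx
      obtain ⟨i, _, rfl⟩ := hx
      exact hgcomm _ _
    have e1 : ((List.range (m + 1)).map fun i => g (i + 1)).prod
        = (((List.range m).map fun i => g (i + 1)).prod) * g 0 := by
      rw [List.range_succ, List.map_append, List.prod_append, List.map_singleton,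
        List.prod_singleton, hgp]
    have e2 : ((List.range (m + 1)).map g).prod
        = g 0 * (((List.range m).map fun i => g (i + 1)).prod) := by
      rw [List.range_succ_eq_map, List.map_cons, List.prod_cons, List.map_map]
      rfl
    rw [e1, e2, hcom.eq]
  have hPδ : Commute (((List.range p).map g).prod) δ := by
    unfold Commute SemiconjBy
    rw [hlist p, hshift]
  have hg0 : g 0 = aeval γ f := by simp [hg]
  constructor
  · rw [← hg0, hmainpow p, hshift, (hPδ.pow_right p).eq]
  · intro i
    exact hcommγ i
end

section
/- Let p be a prime, ρ a primitive p-th root of unity in a field F of characteristic coprime to p. The (p−1)×(p−1) matrix R₁ with entries (R₁)_{ij} = ρ^{ij} − 1 for 1 ≤ i, j ≤ p−1 is invertible. -/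
theorem stmt3 (F : Type*) [Field F] (p : ℕ) (hp : p.Prime)
    (hchar : (p : F) ≠ 0) (ρ : F) (hρ : IsPrimitiveRoot ρ p) :
    IsUnit (Matrix.of fun i j : Fin (p - 1) =>
      ρ ^ ((i.val + 1) * (j.val + 1)) - 1) := by
  set v : Fin (p - 1) → F := fun i => ρ ^ (i.val + 1) with hv
  set U : Matrix (Fin (p - 1)) (Fin (p - 1)) F :=
    Matrix.of (fun k j : Fin (p - 1) => if k ≤ j then (1 : F) else 0) with hU
  have key : (Matrix.of fun i j : Fin (p - 1) =>
      ρ ^ ((i.val + 1) * (j.val + 1)) - 1)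
      = Matrix.diagonal (fun i : Fin (p - 1) => ρ ^ (i.val + 1) - 1) *
        (Matrix.vandermonde v * U) := by
    ext i j
    rw [Matrix.diagonal_mul]
    simp only [Matrix.mul_apply, Matrix.vandermonde_apply, hU, Matrix.of_apply, mul_ite,
      mul_one, mul_zero]
    have h1 : ∑ k : Fin (p - 1), (if k ≤ j then v i ^ (k : ℕ) else 0)
        = ∑ k ∈ Finset.range (j.val + 1), v i ^ k := by
      simp only [Fin.le_def]
      rw [Fin.sum_univ_eq_sum_range (fun k => if k ≤ j.val then v i ^ k else 0)]
      rw [← Finset.sum_filter]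
      congr 1
      ext k
      simp only [Finset.mem_filter, Finset.mem_range]
      omega
    simp only [Fin.le_def] at h1 ⊢
    rw [h1, mul_geom_sum, ← pow_mul]
  rw [key, Matrix.isUnit_iff_isUnit_det, Matrix.det_mul, Matrix.det_mul,
    Matrix.det_diagonal, Matrix.det_vandermonde]
  have hUdet : U.det = 1 := by
    have ht : U.BlockTriangular id := by
      intro a b hab
      simp only [hU, Matrix.of_apply]
      exact if_neg (not_le.mpr hab)
    rw [Matrix.det_of_upperTriangular ht]
    simp [hU]
  rw [hUdet, mul_one]
  rw [isUnit_iff_ne_zero]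
  have hne1 : ∀ i : Fin (p - 1), ρ ^ (i.val + 1) - 1 ≠ 0 := by
    intro i
    have := hρ.pow_ne_one_of_pos_of_lt (Nat.succ_ne_zero _) (by omega : i.val + 1 < p)
    exact sub_ne_zero_of_ne this
  have hvinj : Function.Injective v := by
    intro a b hab
    have := hρ.pow_inj (by omega : a.val + 1 < p) (by omega : b.val + 1 < p) hab
    exact Fin.ext (by omega)
  apply mul_ne_zero
  · exact Finset.prod_ne_zero_iff.mpr fun i _ => hne1 i
  · refine Finset.prod_ne_zero_iff.mpr fun i _ => Finset.prod_ne_zero_iff.mpr fun j hj => ?_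
    rw [Finset.mem_Ioi] at hj
    exact sub_ne_zero_of_ne fun h => absurd (hvinj h) (ne_of_gt hj)
end

section
/- Let V be a p-dimensional vector space over an algebraically closed field F of characteristic coprime to the prime p, containing a primitive p-th root of unity ρ. Suppose α, β ∈ GL(V) satisfy αβ = ρβα, α^p = 1, β^p = 1. Then there is a basis v₀,…,v_{p−1} of V with α(v_i) = ρ^i v_i and β(v_i) = v_{i+1 mod p}. In particular α has p distinct eigenvalues 1, ρ, …, ρ^{p−1}, each with one-dimensional eigenspace. -/
/-!
Since `α β = ρ β α`, the map `β` sends the `c`-eigenspace of `α` into its `ρ c`-eigenspace.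
An eigenvalue `μ` of `α` satisfies `μ ^ p = 1`, so `μ = ρ ^ k`, and applying `β ^ (p - k)` to a
`μ`-eigenvector gives an eigenvector `w` for the eigenvalue `1`. The vectors `β ^ i w` are then
eigenvectors for the `p` distinct eigenvalues `ρ ^ i`, hence a basis of the `p`-dimensional
space `V`, and a basis of eigenvectors with distinct eigenvalues has one-dimensional eigenspaces.
-/

open Module Module.End

section

variable {K V : Type*} [Field K] [AddCommGroup V] [Module K V]

lemma Module.End.pow_apply_mem_eigenspace_of_mul_eq_smul_mul {α β : End K V} {ρ : K}
    (hcomm : α * β = ρ • (β * α)) {c : K} {x : V} (hx : x ∈ eigenspace α c) (n : ℕ) :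
    (β ^ n) x ∈ eigenspace α (ρ ^ n * c) := by
  induction n with
  | zero => simpa using hx
  | succ n ih =>
    rw [mem_eigenspace_iff] at ih ⊢
    have hαβ : α (β ((β ^ n) x)) = ρ • β (α ((β ^ n) x)) := by
      simpa using LinearMap.congr_fun hcomm ((β ^ n) x)
    rw [pow_succ', mul_apply, hαβ, ih, map_smul, smul_smul, pow_succ', mul_assoc]

lemma Module.End.HasEigenvector.pow_apply_of_mul_eq_smul_mul {α β : End K V} {ρ : K}
    (hcomm : α * β = ρ • (β * α)) (hβ : IsUnit β) {c : K} {x : V} (hx : α.HasEigenvector c x)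
    (n : ℕ) : α.HasEigenvector (ρ ^ n * c) ((β ^ n) x) :=
  ⟨pow_apply_mem_eigenspace_of_mul_eq_smul_mul hcomm hx.1 n,
    ((isUnit_iff _).mp (hβ.pow n)).1.ne_iff' (map_zero _) |>.mpr hx.2⟩

lemma Module.End.HasEigenvalue.pow_eq_one {α : End K V} {n : ℕ} (hα : α ^ n = 1) {μ : K}
    (hμ : α.HasEigenvalue μ) : μ ^ n = 1 := by
  obtain ⟨v, hv⟩ := hμ.exists_hasEigenvector
  refine smul_left_injective K hv.2 ?_
  simp only [← hv.pow_apply n, hα, one_apply, one_smul]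

lemma Module.End.exists_hasEigenvector_one_of_mul_eq_smul_mul [IsAlgClosed K]
    [FiniteDimensional K V] [Nontrivial V] {n : ℕ} [NeZero n] {ρ : K} (hρ : IsPrimitiveRoot ρ n)
    {α β : End K V} (hcomm : α * β = ρ • (β * α)) (hαn : α ^ n = 1) (hβn : β ^ n = 1) :
    ∃ w, α.HasEigenvector 1 w := by
  obtain ⟨μ, hμ⟩ := exists_eigenvalue α
  obtain ⟨k, hkn, rfl⟩ := hρ.eq_pow_of_pow_eq_one (hμ.pow_eq_one hαn)
  obtain ⟨v, hv⟩ := hμ.exists_hasEigenvector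
  refine ⟨(β ^ (n - k)) v, ?_⟩
  simpa [← pow_add, Nat.sub_add_cancel hkn.le, hρ.pow_eq_one] using
    hv.pow_apply_of_mul_eq_smul_mul hcomm (.of_pow_eq_one hβn (NeZero.ne n)) (n - k)

lemma Module.Basis.eigenspace_eq_span_singleton {ι : Type*} (b : Basis ι K V) {f : End K V}
    {μ : ι → K} (hμ : Function.Injective μ) (hb : ∀ i, f (b i) = μ i • b i) (i : ι) :
    eigenspace f (μ i) = K ∙ b i := by
  have hcoord : ∀ j, b.coord j ∘ₗ f = μ j • b.coord j := fun j =>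
    b.ext fun k => by
      by_cases hkj : k = j
      · subst hkj; simp [hb]
      · simp [hb, Ne.symm hkj]
  refine le_antisymm (fun x hx => ?_) ?_
  · rw [← Set.image_singleton, b.mem_span_image]
    intro j hj
    rw [Set.mem_singleton_iff]
    by_contra hji
    have hxj : μ i = μ j ∨ b.repr x j = 0 := by
      simpa [mem_eigenspace_iff.mp hx] using LinearMap.congr_fun (hcoord j) x
    exact Finsupp.mem_support_iff.mp hj (hxj.resolve_left (hμ.ne hji).symm)
  · rw [Submodule.span_singleton_le_iff_mem, mem_eigenspace_iff]
    exact hb i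

end

lemma pow_val_add_one_of_pow_eq_one {M : Type*} [Monoid M] {n : ℕ} [NeZero n] {a : M}
    (ha : a ^ n = 1) (i : Fin n) : a ^ ((i + 1 : Fin n) : ℕ) = a * a ^ (i : ℕ) := by
  rw [Fin.val_add, Fin.val_one', ← pow_eq_pow_mod _ ha, pow_add, ← pow_eq_pow_mod _ ha, pow_one,
    pow_mul_comm']

theorem stmt5_general (F : Type*) [Field F] [IsAlgClosed F] (p : ℕ) [NeZero p]
    (ρ : F) (hρ : IsPrimitiveRoot ρ p)
    (V : Type*) [AddCommGroup V] [Module F V] [FiniteDimensional F V]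
    (hdim : Module.finrank F V = p)
    (α β : Module.End F V)
    (hcomm : α * β = ρ • (β * α)) (hαp : α ^ p = 1) (hβp : β ^ p = 1) :
    ∃ v : Module.Basis (Fin p) F V,
      (∀ i : Fin p, α (v i) = ρ ^ (i : ℕ) • v i) ∧
      (∀ i : Fin p, β (v i) = v (i + 1)) ∧
      (∀ i : Fin p, Module.finrank F (Module.End.eigenspace α (ρ ^ (i : ℕ))) = 1) := by
  have : Nontrivial V := nontrivial_of_finrank_pos (by rw [hdim]; exact Nat.pos_of_neZero p)
  obtain ⟨w, hw⟩ := exists_hasEigenvector_one_of_mul_eq_smul_mul hρ hcomm hαp hβp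
  have hv (i : Fin p) : α.HasEigenvector (ρ ^ (i : ℕ)) ((β ^ (i : ℕ)) w) := by
    simpa using hw.pow_apply_of_mul_eq_smul_mul hcomm (.of_pow_eq_one hβp (NeZero.ne p)) i
  have hρ_inj : Function.Injective fun i : Fin p => ρ ^ (i : ℕ) :=
    fun i j hij => Fin.ext (hρ.pow_inj i.isLt j.isLt hij)
  let b := basisOfLinearIndependentOfCardEqFinrank
    (eigenvectors_linearIndependent' α _ hρ_inj _ hv) (by simp [hdim])
  have hb (i : Fin p) : b i = (β ^ (i : ℕ)) w := by simp [b]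
  have hαb (i : Fin p) : α (b i) = ρ ^ (i : ℕ) • b i := hb i ▸ (hv i).apply_eq_smul
  refine ⟨b, hαb, fun i => by simp [hb, pow_val_add_one_of_pow_eq_one hβp], fun i => ?_⟩
  rw [b.eigenspace_eq_span_singleton hρ_inj hαb, finrank_span_singleton (b.ne_zero i)]

theorem stmt5 (F : Type*) [Field F] [IsAlgClosed F] (p : ℕ) (hp : p.Prime) [NeZero p]
    (hchar : (p : F) ≠ 0) (ρ : F) (hρ : IsPrimitiveRoot ρ p)
    (V : Type*) [AddCommGroup V] [Module F V] [FiniteDimensional F V]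
    (hdim : Module.finrank F V = p)
    (α β : Module.End F V) (hα : IsUnit α) (hβ : IsUnit β)
    (hcomm : α * β = ρ • (β * α)) (hαp : α ^ p = 1) (hβp : β ^ p = 1) :
    ∃ v : Module.Basis (Fin p) F V,
      (∀ i : Fin p, α (v i) = ρ ^ (i : ℕ) • v i) ∧
      (∀ i : Fin p, β (v i) = v (i + 1)) ∧
      (∀ i : Fin p, Module.finrank F (Module.End.eigenspace α (ρ ^ (i : ℕ))) = 1) :=
  stmt5_general F p ρ hρ V hdim α β hcomm hαp hβp
end

section
/- Let p be prime, F a field with primitive p-th root of unity ρ, and V a p-dimensional F-vector space with basis v₀,…,v_{p−1}. Let D ⊂ End(V) be the set of diagonal matrices (w.r.t. the v_i) and C the set of circulant matrices S_z (S_z v_j = Σ_i z_i v_{i+j}). Then a subspace W ⊆ V that is invariant under all of D and all of C is either 0 or V. -/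
theorem stmt9 (F : Type*) [Field F] (p : ℕ) (hp : p.Prime) [NeZero p]
    (hchar : (p : F) ≠ 0) (ρ : F) (hρ : IsPrimitiveRoot ρ p)
    (W : Submodule F (Fin p → F))
    (hD : ∀ d : Fin p → F, ∀ x ∈ W, Matrix.toLin' (Matrix.diagonal d) x ∈ W)
    (hC : ∀ z : Fin p → F, ∀ x ∈ W,
      Matrix.toLin' (Matrix.of fun i j : Fin p => z (i - j)) x ∈ W) :
    W = ⊥ ∨ W = ⊤ := by
  by_cases hW : W = ⊥
  · exact Or.inl hW
  right
  obtain ⟨x, hxW, hx0⟩ := Submodule.ne_bot_iff W |>.mp hW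
  obtain ⟨i, hxi⟩ := Function.ne_iff.mp hx0
  simp only [Pi.zero_apply] at hxi
  -- get Pi.single i 1 ∈ W
  have h1 : Pi.single i (1 : F) ∈ W := by
    have hd := hD (Pi.single i 1) x hxW
    have hs := W.smul_mem (x i)⁻¹ hd
    have heq : (x i)⁻¹ • (Matrix.toLin' (Matrix.diagonal (Pi.single i (1:F))) x)
        = Pi.single i (1 : F) := by
      funext j
      simp only [Matrix.toLin'_apply, Pi.smul_apply, Matrix.mulVec_diagonal,
        smul_eq_mul]
      by_cases hji : j = i
      · subst hji
        simp [inv_mul_cancel₀ hxi]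
      · simp [Pi.single_eq_of_ne hji]
    rwa [heq] at hs
  -- all basis vectors are in W
  have hall : ∀ j : Fin p, Pi.single j (1 : F) ∈ W := by
    intro j
    have hc := hC (Pi.single (j - i) 1) _ h1
    have heq : Matrix.toLin' (Matrix.of fun a b : Fin p => (Pi.single (j - i) (1:F) : Fin p → F) (a - b))
        (Pi.single i 1) = Pi.single j (1 : F) := by
      funext k
      simp only [Matrix.toLin'_apply, Matrix.mulVec, dotProduct, Matrix.of_apply]
      rw [Finset.sum_eq_single i]
      · by_cases hk : k = j
        · subst hk; simp
        · rw [Pi.single_eq_of_ne hk, Pi.single_eq_same, mul_one,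
            Pi.single_eq_of_ne]
          intro h
          exact hk (sub_left_injective h)
      · intro b _ hb
        rw [Pi.single_eq_of_ne hb, mul_zero]
      · intro h; exact absurd (Finset.mem_univ i) h
    rwa [heq] at hc
  rw [eq_top_iff]
  intro v _
  have : v = ∑ j : Fin p, (v j) • (Pi.single j (1 : F) : Fin p → F) := by
    funext k
    simp [Finset.sum_apply, Pi.single_apply, Finset.sum_ite_eq', mul_comm]
  rw [this]
  exact W.sum_mem fun j _ => W.smul_mem _ (hall j)
end
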